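/- If there exists a schedule Σ for an instance of SUU with independent jobs (no precedence constraints) with expected makespan T, then there exists an oblivious schedule of length 2T (a fixed sequence of assignment functions f_t : M → J ∪ {⊥}, independent of the set of unfinished jobs) in which the total mass accumulated by all n jobs is at least n/16. -/

import Mathlib

open MeasureTheory ProbabilityTheory
open scoped ENNReal
attribute [local instance] Classical.propDecidable

/-- The set of unfinished jobs at the start of step `t` for an SUU-I instance
(independent jobs, no precedence constraints), when the schedule `f` (an
assignment function for each unfinished-set and step) is executed with success
outcomes `X t i j ω`.  A job completes at step `t` if it is unfinished and
some machine assigned to it succeeds. -/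
noncomputable def unfinishedI {Ω : Type*} {n m : ℕ}
    (f : Finset (Fin n) → ℕ → Fin m → Option (Fin n))
    (X : ℕ → Fin m → Fin n → Ω → Bool) : ℕ → Ω → Finset (Fin n)
  | 0, _ => Finset.univ
  | t + 1, ω =>
    (unfinishedI f X t ω).filter fun j =>
      ¬∃ i, f (unfinishedI f X t ω) t i = some j ∧ X t i j ω = true

/-- The makespan of an execution: the first step by which all jobs are
finished (`∞` if they never all finish). -/
noncomputable def makespanI {Ω : Type*} {n m : ℕ}
    (f : Finset (Fin n) → ℕ → Fin m → Option (Fin n))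
    (X : ℕ → Fin m → Fin n → Ω → Bool) (ω : Ω) : ℝ≥0∞ :=
  ⨅ t ∈ {t : ℕ | unfinishedI f X t ω = ∅}, (t : ℝ≥0∞)

section ObliviousAux
set_option linter.unusedSectionVars false
set_option linter.unusedVariables false
variable {Ω : Type*} [mΩ : MeasurableSpace Ω] {n m : ℕ}
  (f : Finset (Fin n) → ℕ → Fin m → Option (Fin n))
  (X : ℕ → Fin m → Fin n → Ω → Bool)

/-- The σ-algebra generated by the outcomes strictly before time `t`. -/
def mmX (X : ℕ → Fin m → Fin n → Ω → Bool) (t : ℕ) : MeasurableSpace Ω :=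
  ⨆ q ∈ {q : ℕ × Fin m × Fin n | q.1 < t},
    MeasurableSpace.comap (X q.1 q.2.1 q.2.2) inferInstance

lemma mmX_le (hXmeas : ∀ t i j, Measurable (X t i j)) (t : ℕ) : mmX X t ≤ mΩ :=
  iSup₂_le fun q _ => measurable_iff_comap_le.mp (hXmeas q.1 q.2.1 q.2.2)

lemma mmX_mono {t t' : ℕ} (h : t ≤ t') : mmX X t ≤ mmX X t' :=
  biSup_mono fun _ hq => lt_of_lt_of_le hq h

lemma measurable_funX (t : ℕ) :
    @Measurable _ _ (mmX X (t + 1)) _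
      (fun ω => (fun i j => X t i j ω : Fin m → Fin n → Bool)) := by
  letI : MeasurableSpace Ω := mmX X (t + 1)
  refine measurable_pi_lambda _ fun i => measurable_pi_lambda _ fun j => ?_
  exact (measurable_iff_comap_le.mpr le_rfl).mono
    (le_biSup (fun q : ℕ × Fin m × Fin n => MeasurableSpace.comap (X q.1 q.2.1 q.2.2) inferInstance)
      (show ((t, i, j) : ℕ × Fin m × Fin n) ∈ {q : ℕ × Fin m × Fin n | q.1 < t + 1}
        from Nat.lt_succ_self t)) le_rfl

lemma measurableSet_unfinished (t : ℕ) (S : Finset (Fin n)) :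
    MeasurableSet[mmX X t] {ω | unfinishedI f X t ω = S} := by
  induction t generalizing S with
  | zero =>
    have h0 : ∀ ω : Ω, unfinishedI f X 0 ω = Finset.univ := fun _ => rfl
    by_cases h : (Finset.univ : Finset (Fin n)) = S
    · have : {ω | unfinishedI f X 0 ω = S} = Set.univ := by ext ω; simp [h0, h]
      rw [this]; exact @MeasurableSet.univ Ω (mmX X 0)
    · have : {ω | unfinishedI f X 0 ω = S} = ∅ := by ext ω; simp [h0, h]
      rw [this]; exact @MeasurableSet.empty Ω (mmX X 0)
  | succ t ih =>
    have heq : {ω | unfinishedI f X (t+1) ω = S}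
        = ⋃ S' : Finset (Fin n), ({ω | unfinishedI f X t ω = S'} ∩
          ((fun ω => (fun i j => X t i j ω : Fin m → Fin n → Bool)) ⁻¹'
            {v | S'.filter (fun j => ¬∃ i, f S' t i = some j ∧ v i j = true) = S})) := by
      ext ω
      simp only [Set.mem_iUnion, Set.mem_inter_iff, Set.mem_setOf_eq, Set.mem_preimage]
      constructor
      · intro h
        exact ⟨unfinishedI f X t ω, rfl, h⟩
      · rintro ⟨S', h1, h2⟩
        show (unfinishedI f X t ω).filter _ = S
        rw [h1]; exact h2
    rw [heq]
    refine MeasurableSet.iUnion fun S' => MeasurableSet.inter ?_ ?_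
    · exact mmX_mono X (Nat.le_succ t) _ (ih S')
    · exact measurable_funX X t (Set.Finite.measurableSet (Set.toFinite _))

lemma measurable_unfinished (t : ℕ) :
    @Measurable _ _ (mmX X t) ⊤ (unfinishedI f X t) := by
  letI : MeasurableSpace (Finset (Fin n)) := ⊤
  letI : MeasurableSpace Ω := mmX X t
  refine measurable_to_countable' fun S => ?_
  have : (unfinishedI f X t) ⁻¹' {S} = {ω | unfinishedI f X t ω = S} := by
    ext ω; simp
  rw [this]
  exact measurableSet_unfinished f X t S

lemma unfinished_antitone (ω : Ω) : ∀ {t t' : ℕ}, t ≤ t' →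
    unfinishedI f X t' ω ⊆ unfinishedI f X t ω := by
  intro t t' h
  induction t' with
  | zero => simp_all
  | succ t' ih =>
    rcases Nat.lt_or_ge t (t'+1) with h' | h'
    · exact (Finset.filter_subset _ _).trans (ih (by omega))
    · have : t = t' + 1 := by omega
      subst this; rfl

lemma exists_completion (ω : Ω) (j : Fin n) :
    ∀ t : ℕ, j ∉ unfinishedI f X t ω →
      ∃ s < t, j ∈ unfinishedI f X s ω ∧
        ∃ i, f (unfinishedI f X s ω) s i = some j ∧ X s i j ω = true := by
  intro t
  induction t with
  | zero =>
    intro h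
    exact absurd (Finset.mem_univ j) h
  | succ t ih =>
    intro h
    by_cases hj : j ∈ unfinishedI f X t ω
    · refine ⟨t, Nat.lt_succ_self t, hj, ?_⟩
      have : ¬ (j ∈ (unfinishedI f X t ω).filter fun j =>
          ¬∃ i, f (unfinishedI f X t ω) t i = some j ∧ X t i j ω = true) := h
      rw [Finset.mem_filter] at this
      push_neg at this
      exact this hj
    · obtain ⟨s, hs, h1, h2⟩ := ih hj
      exact ⟨s, by omega, h1, h2⟩

lemma sum_range_mul_div_mod {M : Type*} [AddCommMonoid M] (F : ℕ → ℕ → M) (L : ℕ) {mm : ℕ}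
    (hm : 0 < mm) :
    ∑ t ∈ Finset.range L, ∑ i ∈ Finset.range mm, F t i
      = ∑ k ∈ Finset.range (L * mm), F (k / mm) (k % mm) := by
  induction L with
  | zero => simp
  | succ L ih =>
    rw [Finset.sum_range_succ, ih, Nat.succ_mul, Finset.sum_range_add]
    congr 1
    refine Finset.sum_congr rfl fun k hk => ?_
    rw [Finset.mem_range] at hk
    have h1 : (L * mm + k) / mm = L := by
      rw [Nat.add_comm, Nat.mul_comm L mm, Nat.add_mul_div_left _ _ hm,
        Nat.div_eq_of_lt hk, Nat.zero_add]
    have h2 : (L * mm + k) % mm = k := by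
      rw [Nat.add_comm, Nat.mul_comm L mm, Nat.add_mul_mod_self_left, Nat.mod_eq_of_lt hk]
    rw [h1, h2]

lemma stopped_le {c : ℝ} (hc : 0 ≤ c) (K : ℕ) (b : ℕ → ℝ) (hb : ∀ k, 0 ≤ b k)
    (A B : ℕ → Prop) [DecidablePred A] [DecidablePred B]
    (hAB : ∀ k, A k → B k)
    (hA : ∀ k, A k → (∑ k' ∈ Finset.range k, if B k' then b k' else 0) + b k < c) :
    ∑ k ∈ Finset.range K, (if A k then b k else 0) ≤ c := by
  rw [← Finset.sum_filter]
  set s := (Finset.range K).filter A with hs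
  rcases s.eq_empty_or_nonempty with h | h
  · rw [h]; simpa using hc
  · set K0 := s.max' h with hK0
    have hK0s : K0 ∈ s := s.max'_mem h
    have hK0A : A K0 := (Finset.mem_filter.mp hK0s).2
    rw [← Finset.add_sum_erase s b hK0s]
    have hsub : s.erase K0 ⊆ (Finset.range K0).filter B := by
      intro k hk
      have hks := Finset.mem_of_mem_erase hk
      have hkA : A k := (Finset.mem_filter.mp hks).2
      refine Finset.mem_filter.mpr ⟨Finset.mem_range.mpr ?_, hAB k hkA⟩
      exact lt_of_le_of_ne (s.le_max' k hks) (Finset.ne_of_mem_erase hk)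
    have h2 : ∑ k ∈ s.erase K0, b k ≤ ∑ k' ∈ Finset.range K0, if B k' then b k' else 0 := by
      rw [← Finset.sum_filter]
      exact Finset.sum_le_sum_of_subset_of_nonneg hsub fun k _ _ => hb k
    have := hA K0 hK0A
    linarith

end ObliviousAux

section ObliviousKey
variable {Ω : Type*} [mΩ : MeasurableSpace Ω] (μ : Measure Ω)
    [IsProbabilityMeasure μ] {n m : ℕ} (p : Fin m → Fin n → ℝ)
    (f : Finset (Fin n) → ℕ → Fin m → Option (Fin n))
    (X : ℕ → Fin m → Fin n → Ω → Bool)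

/-- By Markov's inequality, all jobs are finished by step `L ≥ 2T` with
probability at least `1/2`. -/
theorem markov_half
    (hXmeas : ∀ t i j, Measurable (X t i j))
    (T : ℝ) (L : ℕ) (hL2T : 2 * T ≤ (L : ℝ))
    (hmk : ∫⁻ ω, makespanI f X ω ∂μ = ENNReal.ofReal T) :
    (2 : ℝ≥0∞)⁻¹ ≤ μ {ω | unfinishedI f X L ω = ∅} := by
  set F := {ω | unfinishedI f X L ω = ∅} with hFdef
  have hFmeas : MeasurableSet F := mmX_le X hXmeas L _ (measurableSet_unfinished f X L ∅)
  have hpt : ∀ ω, Fᶜ.indicator (fun _ => ((L : ℝ≥0∞) + 1)) ω ≤ makespanI f X ω := by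
    intro ω
    by_cases hω : ω ∈ Fᶜ
    · rw [Set.indicator_of_mem hω]
      refine le_iInf₂ fun t ht => ?_
      have hLt : L < t := by
        by_contra hc
        push_neg at hc
        have h1 : unfinishedI f X L ω ⊆ unfinishedI f X t ω := unfinished_antitone f X ω hc
        have h2 : unfinishedI f X t ω = ∅ := ht
        have : unfinishedI f X L ω = ∅ := Finset.subset_empty.mp (h2 ▸ h1)
        exact hω this
      have : ((L : ℝ≥0∞) + 1) = ((L + 1 : ℕ) : ℝ≥0∞) := by push_cast; ring
      rw [this]
      exact_mod_cast Nat.cast_le.mpr hLt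
    · rw [Set.indicator_of_notMem hω]; exact zero_le
  have h1 : ((L : ℝ≥0∞) + 1) * μ Fᶜ ≤ ENNReal.ofReal T := by
    rw [← hmk]
    calc ((L : ℝ≥0∞) + 1) * μ Fᶜ
        = ∫⁻ ω, Fᶜ.indicator (fun _ => ((L : ℝ≥0∞) + 1)) ω ∂μ := by
          rw [lintegral_indicator_const hFmeas.compl]
      _ ≤ ∫⁻ ω, makespanI f X ω ∂μ := lintegral_mono hpt
  have h2 : 2 * ENNReal.ofReal T ≤ (L : ℝ≥0∞) + 1 := by
    have e1 : 2 * ENNReal.ofReal T = ENNReal.ofReal (2 * T) := by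
      rw [ENNReal.ofReal_mul (by norm_num : (0:ℝ) ≤ 2), ENNReal.ofReal_ofNat]
    calc 2 * ENNReal.ofReal T = ENNReal.ofReal (2 * T) := e1
      _ ≤ ENNReal.ofReal (L : ℝ) := ENNReal.ofReal_le_ofReal hL2T
      _ = (L : ℝ≥0∞) := ENNReal.ofReal_natCast L
      _ ≤ (L : ℝ≥0∞) + 1 := le_self_add
  have h3 : ((L : ℝ≥0∞) + 1) * (2 * μ Fᶜ) ≤ ((L : ℝ≥0∞) + 1) * 1 := by
    calc ((L : ℝ≥0∞) + 1) * (2 * μ Fᶜ) = 2 * (((L : ℝ≥0∞) + 1) * μ Fᶜ) := by ring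
      _ ≤ 2 * ENNReal.ofReal T := mul_le_mul_right h1 2
      _ ≤ (L : ℝ≥0∞) + 1 := h2
      _ = ((L : ℝ≥0∞) + 1) * 1 := (mul_one _).symm
  have h4 : 2 * μ Fᶜ ≤ 1 :=
    (ENNReal.mul_le_mul_iff_right (by simp) (by simp)).mp h3
  have h5 : μ Fᶜ ≤ 2⁻¹ := ENNReal.le_inv_iff_mul_le.mpr (by rwa [mul_comm] at h4)
  have h6 := measure_add_measure_compl (μ := μ) hFmeas
  have h7 : (2 : ℝ≥0∞)⁻¹ + 2⁻¹ ≤ μ F + 2⁻¹ := by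
    have hsum : (2 : ℝ≥0∞)⁻¹ + 2⁻¹ = 1 := by
      rw [← two_mul, ENNReal.mul_inv_cancel (by norm_num) (by norm_num)]
    calc (2 : ℝ≥0∞)⁻¹ + 2⁻¹ = 1 := hsum
      _ = μ F + μ Fᶜ := by rw [h6, measure_univ]
      _ ≤ μ F + 2⁻¹ := add_le_add_right h5 _
  exact (ENNReal.add_le_add_iff_right (by simp : (2 : ℝ≥0∞)⁻¹ ≠ ⊤)).mp h7

/-- The key claim: each job accumulates (uncapped) mass at least `1/4` under
the random oblivious schedule induced by the execution, with probability at
least `1/4`. -/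
theorem key_claim
    (hp : ∀ i j, p i j ∈ Set.Icc (0 : ℝ) 1)
    (hXmeas : ∀ t i j, Measurable (X t i j))
    (hXp : ∀ t i j, μ {ω | X t i j ω = true} = ENNReal.ofReal (p i j))
    (hXindep : iIndepFun
      (fun q : ℕ × Fin m × Fin n => X q.1 q.2.1 q.2.2) μ)
    (hm : 0 < m) (L : ℕ)
    (hF : (2 : ℝ≥0∞)⁻¹ ≤ μ {ω | unfinishedI f X L ω = ∅})
    (j : Fin n) :
    (4 : ℝ≥0∞)⁻¹ ≤ μ {ω | 1/4 ≤ ∑ τ ∈ Finset.range L, ∑ i,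
      if f (unfinishedI f X τ ω) τ i = some j then p i j else 0} := by
  have hidx : ∀ k : ℕ, k % m < m := fun k => Nat.mod_lt _ hm
  set idx : ℕ → Fin m := fun k => ⟨k % m, hidx k⟩ with hidxdef
  set a : ℕ → Ω → ℝ := fun k ω =>
    if f (unfinishedI f X (k / m) ω) (k / m) (idx k) = some j then p (idx k) j else 0
    with hadef
  have ha_nonneg : ∀ k ω, 0 ≤ a k ω := by
    intro k ω; rw [hadef]; dsimp only; split
    · exact (hp _ j).1
    · exact le_refl 0
  set M : Ω → ℝ := fun ω => ∑ τ ∈ Finset.range L, ∑ i,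
    if f (unfinishedI f X τ ω) τ i = some j then p i j else 0 with hMdef
  have hM_eq : ∀ ω, M ω = ∑ k ∈ Finset.range (L * m), a k ω := by
    intro ω; rw [hMdef]; dsimp only
    have h1 : ∀ τ : ℕ, (∑ i, if f (unfinishedI f X τ ω) τ i = some j then p i j else 0)
        = ∑ i ∈ Finset.range m,
          (if f (unfinishedI f X τ ω) τ (idx i) = some j then p (idx i) j else 0) := by
      intro τ
      rw [← Fin.sum_univ_eq_sum_range]
      refine Finset.sum_congr rfl fun i _ => ?_
      have : idx (i : ℕ) = i := Fin.ext (Nat.mod_eq_of_lt i.2)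
      rw [this]
    calc ∑ τ ∈ Finset.range L, ∑ i, (if f (unfinishedI f X τ ω) τ i = some j then p i j else 0)
        = ∑ τ ∈ Finset.range L, ∑ i ∈ Finset.range m,
            (if f (unfinishedI f X τ ω) τ (idx i) = some j then p (idx i) j else 0) :=
          Finset.sum_congr rfl fun τ _ => h1 τ
      _ = ∑ k ∈ Finset.range (L * m),
            (if f (unfinishedI f X (k / m) ω) (k / m) (idx (k % m)) = some j
              then p (idx (k % m)) j else 0) :=
          sum_range_mul_div_mod _ L hm
      _ = ∑ k ∈ Finset.range (L * m), a k ω := by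
          refine Finset.sum_congr rfl fun k _ => ?_
          have : idx (k % m) = idx k := Fin.ext (Nat.mod_eq_of_lt (hidx k))
          rw [this, hadef]
  set r : ℕ → Ω → ℝ := fun k ω => ∑ k' ∈ Finset.range k, a k' ω with hrdef
  set A : ℕ → Set Ω := fun k =>
    {ω | f (unfinishedI f X (k / m) ω) (k / m) (idx k) = some j ∧ r k ω + p (idx k) j < 1/4}
    with hAdef
  -- measurability
  have hU_meas : ∀ t t', t ≤ t' → @Measurable _ _ (mmX X t') ⊤ (unfinishedI f X t) :=
    fun t t' h => (measurable_unfinished f X t).mono (mmX_mono X h) le_rfl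
  have ha_meas2 : ∀ k t', k / m ≤ t' → @Measurable _ _ (mmX X t') _ (a k) := by
    intro k t' h
    exact (@measurable_from_top (Finset (Fin n)) ℝ _
      (fun S => if f S (k / m) (idx k) = some j then p (idx k) j else 0)).comp
      (hU_meas (k / m) t' h)
  have hA_meas : ∀ k, MeasurableSet[mmX X (k / m)] (A k) := by
    intro k
    have h1 : MeasurableSet[mmX X (k / m)]
        {ω | f (unfinishedI f X (k / m) ω) (k / m) (idx k) = some j} :=
      hU_meas (k / m) (k / m) le_rfl
        (show @MeasurableSet (Finset (Fin n)) ⊤ {S | f S (k / m) (idx k) = some j} from trivial)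
    have h2 : MeasurableSet[mmX X (k / m)] {ω | r k ω + p (idx k) j < 1/4} := by
      letI : MeasurableSpace Ω := mmX X (k / m)
      have hr : Measurable (r k) := by
        rw [hrdef]
        exact Finset.measurable_sum _ fun k' hk' =>
          ha_meas2 k' _ (Nat.div_le_div_right (Finset.mem_range.mp hk').le)
      exact measurableSet_lt (hr.add_const _) measurable_const
    exact h1.inter h2
  have hA_meas' : ∀ k, MeasurableSet (A k) := fun k => mmX_le X hXmeas _ _ (hA_meas k)
  -- independence
  have hindep : ∀ k, μ (A k ∩ {ω | X (k / m) (idx k) j ω = true})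
      = μ (A k) * ENNReal.ofReal (p (idx k) j) := by
    intro k
    have h_le : ∀ q : ℕ × Fin m × Fin n,
        MeasurableSpace.comap (X q.1 q.2.1 q.2.2) inferInstance ≤ mΩ :=
      fun q => measurable_iff_comap_le.mp (hXmeas q.1 q.2.1 q.2.2)
    have hdisj : Disjoint {q : ℕ × Fin m × Fin n | q.1 < k / m}
        ({((k / m, idx k, j) : ℕ × Fin m × Fin n)} : Set (ℕ × Fin m × Fin n)) := by
      rw [Set.disjoint_singleton_right]
      simp
    have hind := indep_iSup_of_disjoint h_le hXindep.iIndep hdisj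
    simp only [Set.mem_singleton_iff, iSup_iSup_eq_left] at hind
    have hXs : MeasurableSet[MeasurableSpace.comap (X (k / m) (idx k) j) inferInstance]
        {ω | X (k / m) (idx k) j ω = true} := ⟨{true}, trivial, rfl⟩
    have := (Indep_iff _ _ μ).mp hind _ _ (hA_meas k) hXs
    rw [this, hXp]
  -- stopped mass bound
  have hstop : μ (⋃ k ∈ Finset.range (L * m), (A k ∩ {ω | X (k / m) (idx k) j ω = true}))
      ≤ ENNReal.ofReal (1/4) := by
    refine le_trans (measure_biUnion_finset_le _ _) ?_
    have h1 : ∀ k, μ (A k ∩ {ω | X (k / m) (idx k) j ω = true})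
        = ∫⁻ ω, (A k).indicator (fun _ => ENNReal.ofReal (p (idx k) j)) ω ∂μ := by
      intro k
      rw [lintegral_indicator_const (hA_meas' k), hindep k, mul_comm]
    calc ∑ k ∈ Finset.range (L * m), μ (A k ∩ {ω | X (k / m) (idx k) j ω = true})
        = ∫⁻ ω, ∑ k ∈ Finset.range (L * m),
            (A k).indicator (fun _ => ENNReal.ofReal (p (idx k) j)) ω ∂μ := by
          rw [lintegral_finset_sum _ fun k _ => measurable_const.indicator (hA_meas' k)]
          exact Finset.sum_congr rfl fun k _ => h1 k
      _ ≤ ∫⁻ _, ENNReal.ofReal (1/4) ∂μ := by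
          refine lintegral_mono fun ω => ?_
          have hpt : ∑ k ∈ Finset.range (L * m),
              (A k).indicator (fun _ => ENNReal.ofReal (p (idx k) j)) ω
              = ENNReal.ofReal (∑ k ∈ Finset.range (L * m),
                  if ω ∈ A k then p (idx k) j else 0) := by
            rw [ENNReal.ofReal_sum_of_nonneg]
            · refine Finset.sum_congr rfl fun k _ => ?_
              by_cases h : ω ∈ A k
              · simp [Set.indicator_of_mem, h]
              · simp [Set.indicator_of_notMem, h]
            · intro k _
              split
              · exact (hp _ _).1
              · exact le_refl 0
          rw [hpt]
          refine ENNReal.ofReal_le_ofReal ?_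
          refine stopped_le (by norm_num) (L * m) (fun k => p (idx k) j) (fun k => (hp _ _).1)
            (fun k => ω ∈ A k)
            (fun k => f (unfinishedI f X (k / m) ω) (k / m) (idx k) = some j)
            (fun k hk => hk.1) ?_
          intro k hk
          have hreq : (∑ k' ∈ Finset.range k,
              if f (unfinishedI f X (k' / m) ω) (k' / m) (idx k') = some j
                then p (idx k') j else 0) = r k ω := rfl
          rw [hreq]
          exact hk.2
      _ = ENNReal.ofReal (1/4) := by
          rw [lintegral_const, measure_univ, mul_one]
  -- coverage
  have hcover : {ω | unfinishedI f X L ω = ∅} ⊆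
      (⋃ k ∈ Finset.range (L * m), (A k ∩ {ω | X (k / m) (idx k) j ω = true}))
        ∪ {ω | 1/4 ≤ M ω} := by
    intro ω hω
    by_cases hM4 : 1/4 ≤ M ω
    · exact Or.inr hM4
    · push_neg at hM4
      left
      have hjnot : j ∉ unfinishedI f X L ω := by
        rw [Set.mem_setOf_eq] at hω; rw [hω]; exact Finset.notMem_empty j
      obtain ⟨s, hsL, hjs, i, hfi, hXi⟩ := exists_completion f X ω j L hjnot
      have hk1 : (s * m + (i : ℕ)) / m = s := by
        rw [show s * m + (i : ℕ) = (i : ℕ) + m * s by ring, Nat.add_mul_div_left _ _ hm,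
          Nat.div_eq_of_lt i.2, Nat.zero_add]
      have hk2 : idx (s * m + (i : ℕ)) = i := by
        refine Fin.ext ?_
        show (s * m + (i : ℕ)) % m = (i : ℕ)
        rw [show s * m + (i : ℕ) = (i : ℕ) + m * s by ring, Nat.add_mul_mod_self_left,
          Nat.mod_eq_of_lt i.2]
      have hk3 : s * m + (i : ℕ) < L * m := by
        calc s * m + (i : ℕ) < s * m + m := by omega
          _ = (s + 1) * m := by ring
          _ ≤ L * m := Nat.mul_le_mul_right m hsL
      have ha_k : a (s * m + (i : ℕ)) ω = p (idx (s * m + (i : ℕ))) j := by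
        rw [hadef]; dsimp only
        rw [if_pos]
        rw [hk1, hk2]; exact hfi
      refine Set.mem_biUnion (Finset.mem_range.mpr hk3) ⟨⟨?_, ?_⟩, ?_⟩
      · rw [hk1, hk2]; exact hfi
      · have heq : r (s * m + (i : ℕ)) ω + p (idx (s * m + (i : ℕ))) j
            = ∑ k' ∈ Finset.range (s * m + (i : ℕ) + 1), a k' ω := by
          rw [Finset.sum_range_succ, ha_k]
        rw [heq]
        calc ∑ k' ∈ Finset.range (s * m + (i : ℕ) + 1), a k' ω
            ≤ ∑ k' ∈ Finset.range (L * m), a k' ω :=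
              Finset.sum_le_sum_of_subset_of_nonneg
                (Finset.range_subset_range.mpr (by omega)) fun k' _ _ => ha_nonneg k' ω
          _ = M ω := (hM_eq ω).symm
          _ < 1/4 := hM4
      · show X ((s * m + (i : ℕ)) / m) (idx (s * m + (i : ℕ))) j ω = true
        rw [hk1, hk2]; exact hXi
  -- conclusion
  have h5 : (2 : ℝ≥0∞)⁻¹ ≤ ENNReal.ofReal (1/4) + μ {ω | 1/4 ≤ M ω} :=
    le_trans hF (le_trans (measure_mono hcover)
      (le_trans (measure_union_le _ _) (add_le_add_left hstop _)))
  have h6 : ENNReal.ofReal (1/4) = (4 : ℝ≥0∞)⁻¹ := by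
    rw [show (1/4 : ℝ) = (4 : ℝ)⁻¹ by norm_num, ENNReal.ofReal_inv_of_pos (by norm_num),
      ENNReal.ofReal_ofNat]
  have h7 : (2 : ℝ≥0∞)⁻¹ = 4⁻¹ + 4⁻¹ := by
    rw [← two_mul, show (4 : ℝ≥0∞) = 2 * 2 by norm_num,
      ENNReal.mul_inv (by norm_num) (by norm_num), ← mul_assoc,
      ENNReal.mul_inv_cancel (by norm_num) (by norm_num), one_mul]
  rw [h6, h7] at h5
  exact (ENNReal.add_le_add_iff_left (by norm_num : (4 : ℝ≥0∞)⁻¹ ≠ ⊤)).mp h5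

end ObliviousKey

/-- If there is a schedule for an SUU-I instance (independent jobs, machines
with independent Bernoulli success outcomes of probabilities `p i j`) with
expected makespan `T`, then there is an oblivious schedule
`g : ℕ → Fin m → Option (Fin n)` of length `2T` in which the total
(capped) mass accumulated by all `n` jobs is at least `n/16`. -/
theorem exists_oblivious_mass (Ω : Type*) [MeasurableSpace Ω] (μ : Measure Ω)
    [IsProbabilityMeasure μ] (n m : ℕ) (p : Fin m → Fin n → ℝ)
    (hp : ∀ i j, p i j ∈ Set.Icc (0 : ℝ) 1)
    (f : Finset (Fin n) → ℕ → Fin m → Option (Fin n))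
    (X : ℕ → Fin m → Fin n → Ω → Bool)
    (hXmeas : ∀ t i j, Measurable (X t i j))
    (hXp : ∀ t i j, μ {ω | X t i j ω = true} = ENNReal.ofReal (p i j))
    (hXindep : iIndepFun
      (fun q : ℕ × Fin m × Fin n => X q.1 q.2.1 q.2.2) μ)
    (T : ℝ) (hT : 0 ≤ T)
    (hmk : ∫⁻ ω, makespanI f X ω ∂μ = ENNReal.ofReal T) :
    ∃ g : ℕ → Fin m → Option (Fin n),
      (n : ℝ) / 16 ≤ ∑ j,
        min (∑ τ ∈ Finset.range ⌈2 * T⌉₊, ∑ i, if g τ i = some j then p i j else 0) 1 := by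
  rcases Nat.eq_zero_or_pos n with hn | hn
  · subst hn; exact ⟨fun _ _ => none, by simp⟩
  rcases Nat.eq_zero_or_pos m with hm | hm
  · exfalso
    subst hm
    have hU : ∀ t (ω : Ω), unfinishedI f X t ω = Finset.univ := by
      intro t
      induction t with
      | zero => intro ω; rfl
      | succ t ih =>
        intro ω
        show (unfinishedI f X t ω).filter _ = _
        rw [ih ω, Finset.filter_true_of_mem]
        rintro j - ⟨i, -⟩
        exact absurd i.2 (by omega)
    have hmk' : ∀ ω : Ω, makespanI f X ω = ⊤ := by
      intro ω
      have : {t : ℕ | unfinishedI f X t ω = ∅} = ∅ := by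
        ext t
        simp only [Set.mem_setOf_eq, Set.mem_empty_iff_false, iff_false, hU]
        have : Nonempty (Fin n) := ⟨⟨0, hn⟩⟩
        exact Finset.univ_nonempty.ne_empty
      rw [makespanI, this]
      simp
    rw [lintegral_congr hmk', lintegral_const] at hmk
    rw [measure_univ, mul_one] at hmk
    exact ENNReal.ofReal_ne_top hmk.symm
  -- main case
  obtain ⟨ω₀, hω₀⟩ : ∃ ω : Ω, (n : ℝ) / 16 ≤ ∑ j,
      min (∑ τ ∈ Finset.range ⌈2 * T⌉₊, ∑ i,
        if f (unfinishedI f X τ ω) τ i = some j then p i j else 0) 1 := by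
    by_contra hcon
    push_neg at hcon
    set L := ⌈2 * T⌉₊ with hLdef
    have hL2T : 2 * T ≤ (L : ℝ) := Nat.le_ceil _
    have hF : (2 : ℝ≥0∞)⁻¹ ≤ μ {ω | unfinishedI f X L ω = ∅} :=
      markov_half μ f X hXmeas T L hL2T hmk
    set M : Fin n → Ω → ℝ := fun j ω => ∑ τ ∈ Finset.range L, ∑ i,
      if f (unfinishedI f X τ ω) τ i = some j then p i j else 0 with hMdef
    have hkey : ∀ j : Fin n, (4 : ℝ≥0∞)⁻¹ ≤ μ {ω | 1/4 ≤ M j ω} := fun j =>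
      key_claim μ p f X hp hXmeas hXp hXindep hm L hF j
    have hMnonneg : ∀ (j : Fin n) ω, 0 ≤ M j ω := by
      intro j ω
      refine Finset.sum_nonneg fun τ _ => Finset.sum_nonneg fun i _ => ?_
      split
      · exact (hp i j).1
      · exact le_refl 0
    have hMjmeas : ∀ j : Fin n, MeasurableSet {ω | 1/4 ≤ M j ω} := by
      intro j
      have hMmeas : Measurable (M j) := by
        rw [hMdef]
        refine Finset.measurable_sum _ fun τ _ => Finset.measurable_sum _ fun i _ => ?_
        exact (@measurable_from_top (Finset (Fin n)) ℝ _
          (fun S => if f S τ i = some j then p i j else 0)).comp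
          ((measurable_unfinished f X τ).mono (mmX_le X hXmeas τ) le_rfl)
      exact measurableSet_le measurable_const hMmeas
    set N : Ω → ℕ := fun ω => (Finset.univ.filter fun j : Fin n => 1/4 ≤ M j ω).card with hNdef
    have hNle : ∀ ω, 4 * N ω + 1 ≤ n := by
      intro ω
      have h1 : (N ω : ℝ) * (1/4) ≤ ∑ j, min (M j ω) 1 := by
        calc (N ω : ℝ) * (1/4)
            = ∑ _j ∈ Finset.univ.filter (fun j : Fin n => 1/4 ≤ M j ω), (1/4 : ℝ) := by
              rw [Finset.sum_const, nsmul_eq_mul, hNdef]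
          _ ≤ ∑ j ∈ Finset.univ.filter (fun j : Fin n => 1/4 ≤ M j ω), min (M j ω) 1 :=
              Finset.sum_le_sum fun j hj =>
                le_min ((Finset.mem_filter.mp hj).2) (by norm_num)
          _ ≤ ∑ j, min (M j ω) 1 :=
              Finset.sum_le_sum_of_subset_of_nonneg (Finset.filter_subset _ _)
                fun j _ _ => le_min (hMnonneg j ω) zero_le_one
      have h2 : ∑ j, min (M j ω) 1 < (n : ℝ) / 16 := hcon ω
      have h3 : (N ω : ℝ) < (n : ℝ) / 4 := by linarith
      have h4 : ((4 * N ω : ℕ) : ℝ) < (n : ℝ) := by push_cast; linarith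
      have h5 : 4 * N ω < n := by exact_mod_cast h4
      omega
    have hNeq : ∀ ω, (N ω : ℝ≥0∞)
        = ∑ j : Fin n, Set.indicator {ω' | 1/4 ≤ M j ω'} (fun _ => (1 : ℝ≥0∞)) ω := by
      intro ω
      rw [hNdef]
      dsimp only
      rw [Finset.card_filter]
      push_cast
      refine Finset.sum_congr rfl fun j _ => ?_
      by_cases h : 1/4 ≤ M j ω
      · rw [Set.indicator_of_mem (show ω ∈ {ω' | 1/4 ≤ M j ω'} from h), if_pos h]
      · rw [Set.indicator_of_notMem (show ω ∉ {ω' | 1/4 ≤ M j ω'} from h), if_neg h]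
    have hint : ∫⁻ ω, (N ω : ℝ≥0∞) ∂μ = ∑ j : Fin n, μ {ω | 1/4 ≤ M j ω} := by
      rw [lintegral_congr hNeq,
        lintegral_finset_sum _ fun j _ => measurable_const.indicator (hMjmeas j)]
      refine Finset.sum_congr rfl fun j _ => ?_
      rw [lintegral_indicator_const (hMjmeas j), one_mul]
    have hlow : (n : ℝ≥0∞) ≤ 4 * ∫⁻ ω, (N ω : ℝ≥0∞) ∂μ := by
      rw [hint, Finset.mul_sum]
      calc (n : ℝ≥0∞) = ∑ _j : Fin n, (1 : ℝ≥0∞) := by simp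
        _ ≤ ∑ j : Fin n, 4 * μ {ω | 1/4 ≤ M j ω} := by
            refine Finset.sum_le_sum fun j _ => ?_
            calc (1 : ℝ≥0∞) = 4 * 4⁻¹ :=
                  (ENNReal.mul_inv_cancel (by norm_num) (by norm_num)).symm
              _ ≤ 4 * μ {ω | 1/4 ≤ M j ω} := mul_le_mul_right (hkey j) 4
    have hup : 4 * (∫⁻ ω, (N ω : ℝ≥0∞) ∂μ) + 1 ≤ (n : ℝ≥0∞) := by
      calc 4 * (∫⁻ ω, (N ω : ℝ≥0∞) ∂μ) + 1
          = ∫⁻ ω, (4 * (N ω : ℝ≥0∞) + 1) ∂μ := by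
            rw [lintegral_add_right' _ aemeasurable_const,
              lintegral_const_mul' _ _ (by norm_num : (4 : ℝ≥0∞) ≠ ⊤),
              lintegral_const, measure_univ, mul_one]
        _ ≤ ∫⁻ _, (n : ℝ≥0∞) ∂μ := by
            refine lintegral_mono fun ω => ?_
            have := hNle ω
            calc 4 * (N ω : ℝ≥0∞) + 1 = ((4 * N ω + 1 : ℕ) : ℝ≥0∞) := by push_cast; ring
              _ ≤ (n : ℝ≥0∞) := Nat.cast_le.mpr this
        _ = (n : ℝ≥0∞) := by rw [lintegral_const, measure_univ, mul_one]
    have hcontr : (n : ℝ≥0∞) + 1 ≤ (n : ℝ≥0∞) := le_trans (add_le_add_left hlow 1) hup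
    have : (n : ℝ≥0∞) < (n : ℝ≥0∞) + 1 :=
      ENNReal.lt_add_right (by simp) one_ne_zero
    exact absurd hcontr (not_le.mpr this)
  exact ⟨fun τ i => f (unfinishedI f X τ ω₀) τ i, hω₀⟩
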